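/- Let G = (V,E) be an unweighted digraph. If G is a 2-sequence graph (i.e., admits a 2-realization), then its condensation R(G) is a 2-sequence graph. -/

import Mathlib

/-- The sequence digraph of `x` with window size `w` has an arc `(u,v)` exactly when
there are positions `k < k' < k + w` with `x_k = u` and `x_{k'} = v`. -/
def seqArc {V : Type*} (w : ℕ) (x : List V) (u v : V) : Prop :=
  ∃ k k' : ℕ, k < k' ∧ k' < k + w ∧ x[k]? = some u ∧ x[k']? = some v

/-- `x` is a `w`-realization of the digraph on vertex set `V` (self-loops allowed)
with adjacency relation `Adj`. -/
def IsRealizationD {V : Type*} (w : ℕ) (Adj : V → V → Prop) (x : List V) : Prop :=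
  x ≠ [] ∧ (∀ v : V, v ∈ x) ∧ ∀ u v : V, Adj u v ↔ seqArc w x u v

/-- Two vertices are equivalent when each is reachable from the other:
the classes are the strongly connected components of the digraph. -/
def sccSetoid {V : Type*} (Adj : V → V → Prop) : Setoid V where
  r u v := Relation.ReflTransGen Adj u v ∧ Relation.ReflTransGen Adj v u
  iseqv := ⟨fun _ => ⟨Relation.ReflTransGen.refl, Relation.ReflTransGen.refl⟩,
    fun h => ⟨h.2, h.1⟩, fun h1 h2 => ⟨h1.1.trans h2.1, h2.2.trans h1.2⟩⟩

/-- Adjacency of the condensation `R(G)`: its vertices are the strongly connected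
components of `G`, with an arc `(C, C')` exactly when `C ≠ C'` and some arc of `G`
goes from `C` to `C'`. -/
def condAdj {V : Type*} (Adj : V → V → Prop) :
    Quotient (sccSetoid Adj) → Quotient (sccSetoid Adj) → Prop := fun C C' =>
  C ≠ C' ∧ ∃ u v : V, Adj u v ∧
    Quotient.mk (sccSetoid Adj) u = C ∧ Quotient.mk (sccSetoid Adj) v = C'

/-! Merge vertices along any surjection `f` and collapse consecutive repeats of the image
sequence. A consecutive pair of the collapsed sequence is a consecutive pair of `f(x)` with
distinct entries, i.e. the image of an arc of `G` joining distinct classes, so the result realizes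
the loop-free image digraph; the condensation is the case `f = Quotient.mk`. -/

namespace List

variable {α : Type*}

theorem exists_destutter'_eq_cons (R : α → α → Prop) [DecidableRel R] (a : α) (l : List α) :
    ∃ t, l.destutter' R a = a :: t := by
  induction l generalizing a with
  | nil => exact ⟨[], rfl⟩
  | cons b l ih =>
    by_cases hab : R a b
    · exact ⟨_, destutter'_cons_pos l hab⟩
    · rw [destutter'_cons_neg l hab]
      exact ih a

theorem pair_infix_map_iff {β : Type*} {f : α → β} {l : List α} {c d : β} :
    [c, d] <:+: l.map f ↔ ∃ u v, [u, v] <:+: l ∧ f u = c ∧ f v = d := by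
  rw [infix_map_iff]
  constructor
  · rintro ⟨l', hl', hcd⟩
    obtain ⟨u, t, rfl, hu, ht⟩ := map_eq_cons_iff.1 hcd.symm
    obtain ⟨v, t, rfl, hv, ht⟩ := map_eq_cons_iff.1 ht
    obtain rfl := map_eq_nil_iff.1 ht
    exact ⟨u, v, hl', hu, hv⟩
  · rintro ⟨u, v, huv, rfl, rfl⟩
    exact ⟨[u, v], huv, rfl⟩

variable [DecidableEq α]

theorem mem_destutter'_ne {a b : α} {l : List α} :
    b ∈ l.destutter' (· ≠ ·) a ↔ b ∈ a :: l := by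
  refine ⟨fun h => (destutter'_sublist l _ a).subset h, fun h => ?_⟩
  induction l generalizing a with
  | nil => simpa using h
  | cons c l ih =>
    by_cases hac : a = c
    · subst hac
      rw [destutter'_cons_neg l (not_not.2 rfl)]
      exact ih (by simpa using h)
    · rw [destutter'_cons_pos l hac]
      rcases mem_cons.1 h with rfl | h
      · exact mem_cons_self
      · exact mem_cons_of_mem _ (ih h)

theorem mem_destutter_ne {b : α} {l : List α} : b ∈ l.destutter (· ≠ ·) ↔ b ∈ l := by
  cases l with
  | nil => simp
  | cons a l => rw [destutter_cons', mem_destutter'_ne]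

theorem pair_infix_destutter'_ne_iff {a u v : α} {l : List α} :
    [u, v] <:+: l.destutter' (· ≠ ·) a ↔ u ≠ v ∧ [u, v] <:+: a :: l := by
  induction l generalizing a with
  | nil => simpa using fun h : [u, v] <:+: [a] => by simpa using h.length_le
  | cons c l ih =>
    by_cases hac : a = c
    · subst hac
      rw [destutter'_cons_neg l (not_not.2 rfl), ih, infix_cons_iff (l₂ := a :: l)]
      simp only [cons_prefix_cons]
      grind
    · obtain ⟨t, ht⟩ := exists_destutter'_eq_cons (· ≠ ·) c l
      rw [destutter'_cons_pos l hac, infix_cons_iff, ih, infix_cons_iff (l₂ := c :: l), ht]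
      simp only [cons_prefix_cons]
      grind

theorem pair_infix_destutter_ne_iff {u v : α} {l : List α} :
    [u, v] <:+: l.destutter (· ≠ ·) ↔ u ≠ v ∧ [u, v] <:+: l := by
  cases l with
  | nil => simp
  | cons a l => rw [destutter_cons', pair_infix_destutter'_ne_iff]

end List

theorem seqArc_two_iff {V : Type*} {x : List V} {u v : V} : seqArc 2 x u v ↔ [u, v] <:+: x := by
  rw [List.infix_iff_getElem?]
  constructor
  · rintro ⟨k, k', hkk', hk', hu, hv⟩
    obtain rfl : k' = k + 1 := by omega
    have hlen := (List.getElem?_eq_some_iff.1 hv).1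
    refine ⟨k, by simp only [List.length_cons, List.length_nil]; omega, ?_⟩
    rintro (_ | _ | i) hi
    · simpa using hu
    · simpa [Nat.add_comm] using hv
    · simp at hi
  · rintro ⟨k, -, h⟩
    exact ⟨k, k + 1, by omega, by omega, by simpa using h 0 Nat.two_pos,
      by simpa [Nat.add_comm] using h 1 Nat.one_lt_two⟩

open List in
theorem IsRealizationD.destutter_map {V W : Type*} [DecidableEq W] {Adj : V → V → Prop}
    {x : List V} (hx : IsRealizationD 2 Adj x) {f : V → W} (hf : Function.Surjective f) :
    IsRealizationD 2 (fun c d => c ≠ d ∧ ∃ u v, Adj u v ∧ f u = c ∧ f v = d)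
      ((x.map f).destutter (· ≠ ·)) := by
  obtain ⟨hne, hmem, hadj⟩ := hx
  refine ⟨by simpa [destutter_eq_nil] using hne, fun c => ?_, fun c d => ?_⟩
  · obtain ⟨v, rfl⟩ := hf c
    exact mem_destutter_ne.2 (mem_map_of_mem (hmem v))
  · simp only [hadj, seqArc_two_iff, pair_infix_destutter_ne_iff, pair_infix_map_iff]

theorem stmt3_general {V : Type*} (Adj : V → V → Prop) :
    (∃ x : List V, IsRealizationD 2 Adj x) →
    ∃ y : List (Quotient (sccSetoid Adj)), IsRealizationD 2 (condAdj Adj) y := by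
  classical
  rintro ⟨x, hx⟩
  exact ⟨_, hx.destutter_map Quotient.mk_surjective⟩

theorem stmt3 {V : Type*} [Fintype V] (Adj : V → V → Prop) :
    (∃ x : List V, IsRealizationD 2 Adj x) →
    ∃ y : List (Quotient (sccSetoid Adj)), IsRealizationD 2 (condAdj Adj) y :=
  stmt3_general Adj
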